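/- Let T̃_m denote the number of typed search walks of length m. Then T̃_M = o(4^M) as M → ∞; that is, the quotient T̃_M / 4^M tends to 0 as M tends to infinity. -/

import Mathlib

/-- A search walk: a finite sequence of nonzero integers each at most `1`,
all of whose partial sums are at least `1`, and whose total sum is `1`. -/
def IsSearchWalk (D : List ℤ) : Prop :=
  (∀ d ∈ D, d ≠ 0 ∧ d ≤ 1) ∧
  (∀ k, 1 ≤ k → k ≤ D.length → 1 ≤ (D.take k).sum) ∧
  D.sum = 1

/-- `Tt m` is the number of typed search walks of length `m`: pairs of a search
walk `D` of length `m` together with an assignment of a label in `{1,2,3,4}`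
(here modelled as `Fin 4`) to each entry of `D` that is at most `-2` (the
assignment is recorded as the list of labels of those entries in order). -/
noncomputable def Tt (m : ℕ) : ℕ :=
  Nat.card {p : List ℤ × List (Fin 4) //
    p.1.length = m ∧ IsSearchWalk p.1 ∧
    p.2.length = (p.1.filter fun d => decide (d ≤ -2)).length}

/-! Only the total sum matters. A typed walk of length `m` has all its jumps at least `2 - m`,
so it is a word of length `m` over the finite alphabet `TypedStep m` whose values sum to `1`.
By exponential tilting, for every `x > 0` there are at most `x⁻¹ (∑ₐ x ^ value a) ^ m` such
words; at `x = 5/2` the inner sum is at most `5/2 + 2/5 + 4 ∑_{k ≥ 2} (2/5)^k = 119/30 < 4`. -/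

open Finset

abbrev TypedStep (n : ℕ) := Bool ⊕ (Fin n × Fin 4)

namespace TypedStep

variable {n : ℕ}

def value : TypedStep n → ℤ
  | .inl true => 1
  | .inl false => -1
  | .inr (k, _) => -(k + 2)

def label : TypedStep n → Option (Fin 4)
  | .inl _ => none
  | .inr (_, t) => some t

theorem exists_ofFn_map_value_eq (L : List (Fin 4)) (D : List ℤ)
    (hD : ∀ d ∈ D, d ≠ 0 ∧ d ≤ 1 ∧ -(n + 2 : ℤ) < d)
    (hL : L.length = (D.filter fun d => decide (d ≤ -2)).length) :
    ∃ w : Fin D.length → TypedStep n,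
      (List.ofFn w).map value = D ∧ (List.ofFn w).filterMap label = L := by
  induction D generalizing L with
  | nil => exact ⟨Fin.elim0, rfl, by simpa using hL⟩
  | cons d D ih =>
    obtain ⟨hd0, hd1, hdn⟩ := hD d List.mem_cons_self
    have hD' := fun x hx => hD x (List.mem_cons_of_mem d hx)
    by_cases hd : d ≤ -2
    · obtain ⟨t, L, rfl⟩ : ∃ t L', L = t :: L' :=
        List.exists_cons_of_length_eq_add_one (by simpa [List.filter_cons, hd] using hL)
      obtain ⟨w, hv, hl⟩ := ih L hD' (by simpa [List.filter_cons, hd] using hL)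
      refine ⟨Fin.cons (.inr (⟨(-d - 2).toNat, by omega⟩, t)) w, ?_, ?_⟩
      · simp only [List.ofFn_cons, List.map_cons, hv, value]
        congr 1
        omega
      · simp [hl, label]
    · obtain ⟨w, hv, hl⟩ := ih L hD' (by simpa [List.filter_cons, hd] using hL)
      obtain rfl | rfl : d = 1 ∨ d = -1 := by omega
      · exact ⟨Fin.cons (.inl true) w, by simp [hv, value],
          by simp only [List.ofFn_cons, List.filterMap_cons, label, hl]⟩
      · exact ⟨Fin.cons (.inl false) w, by simp [hv, value],
          by simp only [List.ofFn_cons, List.filterMap_cons, label, hl]⟩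

theorem sum_rpow_value_le (n : ℕ) : ∑ a : TypedStep n, (5 / 2 : ℝ) ^ (value a : ℝ) ≤ 119 / 30 := by
  simp only [Real.rpow_intCast, Fintype.sum_sum_type, Fintype.sum_bool, Fintype.sum_prod_type, value]
  have hterm : ∀ k : ℕ, (5 / 2 : ℝ) ^ (-((k : ℤ) + 2)) = 4 / 25 * (2 / 5) ^ k := fun k => by
    rw [zpow_neg, show (k : ℤ) + 2 = (k + 2 : ℕ) by push_cast; rfl, zpow_natCast, pow_add,
      mul_inv, ← inv_pow, ← inv_pow]
    norm_num
    ring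
  have hgeom : ∑ k : Fin n, (2 / 5 : ℝ) ^ (k : ℕ) ≤ 5 / 3 := by
    rw [Fin.sum_univ_eq_sum_range (fun k => (2 / 5 : ℝ) ^ k), range_eq_Ico]
    have := geom_sum_Ico_le_of_lt_one (m := 0) (n := n) (x := (2 / 5 : ℝ)) (by norm_num) (by norm_num)
    norm_num at this ⊢
    linarith
  simp only [hterm, sum_const, card_univ, Fintype.card_fin, nsmul_eq_mul, ← mul_sum]
  norm_num
  linarith

end TypedStep

theorem IsSearchWalk.two_sub_length_le {D : List ℤ} (h : IsSearchWalk D) {d : ℤ} (hd : d ∈ D) :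
    2 - (D.length : ℤ) ≤ d := by
  classical
  have hsum : d + (D.erase d).sum = 1 := (List.sum_erase hd).trans h.2.2
  have hrest : (D.erase d).sum ≤ (D.length - 1 : ℕ) := by
    simpa [List.length_erase_of_mem hd] using
      List.sum_le_card_nsmul (D.erase d) 1 fun x hx => (h.1 x (List.mem_of_mem_erase hx)).2
  have := List.length_pos_of_mem hd
  omega

theorem card_sum_eq_le_rpow_mul_pow {α : Type*} [Fintype α] (v : α → ℝ) (m : ℕ) (s : ℝ) {x : ℝ}
    (hx : 0 < x) :
    (Nat.card {w : Fin m → α // ∑ i, v (w i) = s} : ℝ) ≤ x ^ (-s) * (∑ a, x ^ v a) ^ m := by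
  classical
  rw [Nat.card_eq_fintype_card, Fintype.card_subtype, card_eq_sum_ones, Nat.cast_sum]
  calc ∑ w ∈ univ.filter (fun w : Fin m → α => ∑ i, v (w i) = s), ((1 : ℕ) : ℝ)
      = ∑ w ∈ univ.filter (fun w : Fin m → α => ∑ i, v (w i) = s), x ^ (-s) * x ^ ∑ i, v (w i) := by
        refine sum_congr rfl fun w hw => ?_
        rw [(mem_filter.1 hw).2, ← Real.rpow_add hx]
        simp
    _ ≤ ∑ w : Fin m → α, x ^ (-s) * x ^ ∑ i, v (w i) :=
        sum_le_sum_of_subset_of_nonneg (filter_subset _ _) fun _ _ _ => by positivity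
    _ = x ^ (-s) * (∑ a, x ^ v a) ^ m := by
        rw [← mul_sum, ← Fin.prod_const, Fintype.prod_sum]
        simp_rw [Real.rpow_sum_of_pos hx]

open TypedStep in
theorem Tt_le_card_sum_value_eq_one (m : ℕ) :
    Tt m ≤ Nat.card {w : Fin m → TypedStep m // ∑ i, (value (w i) : ℝ) = 1} := by
  have key : ∀ p : {p : List ℤ × List (Fin 4) // p.1.length = m ∧ IsSearchWalk p.1 ∧
      p.2.length = (p.1.filter fun d => decide (d ≤ -2)).length},
      ∃ w : {w : Fin m → TypedStep m // ∑ i, (value (w i) : ℝ) = 1},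
        ((List.ofFn w.1).map value, (List.ofFn w.1).filterMap label) = p.1 := by
    rintro ⟨⟨D, L⟩, hm, hD, hL⟩
    dsimp only at hm hD hL ⊢
    subst hm
    obtain ⟨w, hv, hl⟩ := exists_ofFn_map_value_eq (n := D.length) L D
      (fun d hd => ⟨(hD.1 d hd).1, (hD.1 d hd).2, by have := hD.two_sub_length_le hd; omega⟩) hL
    refine ⟨⟨w, ?_⟩, by simp [hv, hl]⟩
    have := congrArg List.sum hv
    rw [List.map_ofFn, List.sum_ofFn, hD.2.2] at this
    exact_mod_cast this
  choose enc henc using key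
  exact Nat.card_le_card_of_injective enc fun p q h => Subtype.ext ((henc p).symm.trans (h ▸ henc q))

theorem typedSearchWalk_count_little_o :
    Filter.Tendsto (fun M : ℕ => (Tt M : ℝ) / (4 : ℝ) ^ M)
      Filter.atTop (nhds 0) := by
  have hbound : ∀ M : ℕ, (Tt M : ℝ) / 4 ^ M ≤ 2 / 5 * (119 / 120) ^ M := fun M => by
    rw [div_le_iff₀ (by positivity)]
    calc (Tt M : ℝ)
        ≤ Nat.card {w : Fin M → TypedStep M // ∑ i, (TypedStep.value (w i) : ℝ) = 1} :=
          Nat.cast_le.2 (Tt_le_card_sum_value_eq_one M)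
      _ ≤ (5 / 2) ^ (-1 : ℝ) * (∑ a : TypedStep M, (5 / 2 : ℝ) ^ (a.value : ℝ)) ^ M :=
          card_sum_eq_le_rpow_mul_pow (fun a : TypedStep M => (a.value : ℝ)) M 1 (by norm_num)
      _ ≤ (5 / 2) ^ (-1 : ℝ) * (119 / 30) ^ M := by gcongr; exact TypedStep.sum_rpow_value_le M
      _ = 2 / 5 * (119 / 120) ^ M * 4 ^ M := by
          rw [Real.rpow_neg_one, mul_assoc, ← mul_pow]; norm_num
  refine squeeze_zero (fun M => by positivity) hbound ?_
  simpa using (tendsto_pow_atTop_nhds_zero_of_lt_one (by norm_num) (by norm_num)).const_mul (2 / 5 : ℝ)
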